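/- Let t be a rooted plane tree and list its vertices in lexicographic order as v_0 = ∅, v_1, …, v_{|t|−1}, with v_{|t|} := v_0. Then sup over 0 ≤ s ≤ 1 of |C_t(s) − H_t(φ_t(s))| ≤ 2 + max over 0 ≤ i < |t| of dist_t(v_i, v_{i+1}). -/

import Mathlib

open MeasureTheory Filter Topology
open scoped ENNReal NNReal Classical

noncomputable section

namespace TreeSym

/-- Ulam–Harris words over the positive integers. -/
abbrev Vertex : Type := List ℕ+

instance : MeasurableSpace Vertex := ⊤
instance : MeasurableSpace (Finset Vertex) := ⊤

/-- A finite set of Ulam–Harris words is (the vertex set of) a rooted plane tree if it contains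
the empty word, is prefix-closed, and is closed under decreasing the last letter. -/
def IsPlaneTreeSet (t : Finset Vertex) : Prop :=
  ([] : Vertex) ∈ t ∧
  (∀ v ∈ t, ∀ u : Vertex, u <+: v → u ∈ t) ∧
  (∀ v : Vertex, ∀ i j : ℕ+, v ++ [i] ∈ t → j ≤ i → v ++ [j] ∈ t)

/-- The number of children of `v` in the vertex set `t`. -/
def nChild (t : Finset Vertex) (v : Vertex) : ℕ :=
  (t.filter fun w => ∃ i : ℕ+, w = v ++ [i]).card

/-- Length of the longest common prefix of two words. -/
def lcpLen : Vertex → Vertex → ℕ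
  | a :: u, b :: v => if a = b then lcpLen u v + 1 else 0
  | _, _ => 0

/-- The graph distance between two vertices of a plane tree. -/
def treeDist (u v : Vertex) : ℕ := u.length + v.length - 2 * lcpLen u v

/-- History of the contour exploration of the plane tree with vertex set `t`
(most recently visited vertex first). -/
def contourHist (t : Finset Vertex) : ℕ → List Vertex
  | 0 => [([] : Vertex)]
  | n + 1 =>
    let h := contourHist t n
    let cur := h.headI
    if (∃ m : ℕ, cur ++ [m.succPNat] ∈ t ∧ cur ++ [m.succPNat] ∉ h) then
      (cur ++ [(sInf {m : ℕ | cur ++ [m.succPNat] ∈ t ∧ cur ++ [m.succPNat] ∉ h}).succPNat]) :: h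
    else
      cur.dropLast :: h

/-- The contour exploration `θ_t`. -/
def theta (t : Finset Vertex) (i : ℕ) : Vertex := (contourHist t i).headI

/-- Piecewise linear interpolation: `interpFun n f (i/n) = f i` for `0 ≤ i ≤ n`, linear in
between. -/
def interpFun (n : ℕ) (f : ℕ → ℝ) (s : ℝ) : ℝ :=
  f 0 + ∑ k ∈ Finset.range n, (f (k + 1) - f k) * max 0 (min 1 (s * n - k))

lemma continuous_interpFun (n : ℕ) (f : ℕ → ℝ) : Continuous (interpFun n f) := by
  unfold interpFun
  refine continuous_const.add (continuous_finset_sum _ fun k _ => continuous_const.mul ?_)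
  exact continuous_const.max (continuous_const.min
    ((continuous_id.mul continuous_const).sub continuous_const))

/-- Piecewise linear interpolation, as a continuous map on `[0,1]`. -/
def interpMap (n : ℕ) (f : ℕ → ℝ) : C(unitInterval, ℝ) :=
  ⟨fun s => interpFun n f s, (continuous_interpFun n f).comp continuous_subtype_val⟩

/-- A multitype labeled plane tree with type space `S`: a finite set of Ulam–Harris words,
together with a type and a displacement (the label increment along the edge to the parent)
attached to each word. -/
structure MTree (S : Type*) where
  verts : Finset Vertex
  type : Vertex → S
  disp : Vertex → ℝ

/-- The underlying vertex set is a plane tree. -/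
def MTree.IsPlaneTree {S : Type*} (T : MTree S) : Prop := IsPlaneTreeSet T.verts

instance {S : Type*} [MeasurableSpace S] : MeasurableSpace (MTree S) :=
  MeasurableSpace.comap (fun T => (T.verts, T.type, T.disp)) inferInstance

/-- The label of a vertex: the sum of the displacements along the path from the root. -/
def labelOf {S : Type*} (T : MTree S) (v : Vertex) : ℝ :=
  ∑ j ∈ Finset.range v.length, T.disp (v.take (j + 1))

/-- The contour process, as a function on `ℝ`. -/
def contourFun {S : Type*} (T : MTree S) (s : ℝ) : ℝ :=
  interpFun (2 * T.verts.card - 2) (fun i => ((theta T.verts i).length : ℝ)) s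

/-- The label process, as a function on `ℝ`. -/
def labelFun {S : Type*} (T : MTree S) (s : ℝ) : ℝ :=
  interpFun (2 * T.verts.card - 2) (fun i => labelOf T (theta T.verts i)) s

/-- The contour process `C` of a tree, as a continuous map on `[0,1]`. -/
def contourProcess {S : Type*} (T : MTree S) : C(unitInterval, ℝ) :=
  interpMap (2 * T.verts.card - 2) fun i => ((theta T.verts i).length : ℝ)

/-- The label process `Z` of a labeled tree, as a continuous map on `[0,1]`. -/
def labelProcess {S : Type*} (T : MTree S) : C(unitInterval, ℝ) :=
  interpMap (2 * T.verts.card - 2) fun i => labelOf T (theta T.verts i)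

/-- The process `Λ^{(q)}` counting visited vertices of type `q` along the contour. -/
def lambdaProcess {S : Type*} (q : S) (T : MTree S) : C(unitInterval, ℝ) :=
  interpMap (2 * T.verts.card - 2) fun i =>
    (((Finset.range i).filter fun j => T.type (theta T.verts j) = q).card : ℝ)

/-! ### Symmetrization -/

/-- A vector of permutations, one for each potential vertex. -/
abbrev PermVec : Type := Vertex → Equiv.Perm ℕ+

/-- Relabel a word according to a permutation vector, the permutation used at each level being
the one attached to the (original) prefix. -/
def permWordAux (σ : PermVec) : Vertex → Vertex → Vertex
  | _, [] => []
  | p, i :: rest => σ p i :: permWordAux σ (p ++ [i]) rest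

def permWord (σ : PermVec) (v : Vertex) : Vertex := permWordAux σ [] v

/-- The inverse relabeling. -/
def invWordAux (σ : PermVec) : Vertex → Vertex → Vertex
  | _, [] => []
  | p, j :: rest => (σ p)⁻¹ j :: invWordAux σ (p ++ [(σ p)⁻¹ j]) rest

def invWord (σ : PermVec) (w : Vertex) : Vertex := invWordAux σ [] w

/-- Apply a permutation vector to a labeled multitype tree: children are reordered at every
vertex, types and displacements following their vertices and edges. -/
def permApply {S : Type*} (σ : PermVec) (T : MTree S) : MTree S :=
  ⟨T.verts.image (permWord σ), fun w => T.type (invWord σ w), fun w => T.disp (invWord σ w)⟩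

/-- The set `P_t` of admissible permutation vectors for `T`: at a vertex with `k` children the
permutation fixes everything above `k` and permutes `{1,…,k}`; away from the tree it is the
identity. -/
def PermSet {S : Type*} (T : MTree S) : Set PermVec :=
  {σ | (∀ v ∈ T.verts,
          (∀ i : ℕ+, (i : ℕ) ≤ nChild T.verts v → ((σ v i : ℕ) ≤ nChild T.verts v)) ∧
          (∀ i : ℕ+, nChild T.verts v < (i : ℕ) → σ v i = i)) ∧
        ∀ v ∉ T.verts, σ v = 1}

/-- The law of the symmetrization of the (deterministic) tree `T`: the uniform average of the
point masses at `σ(T)`, `σ ∈ P_T`. -/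
def symKernel {S : Type*} [MeasurableSpace S] (T : MTree S) : Measure (MTree S) :=
  ((PermSet T).ncard : ℝ≥0∞)⁻¹ •
    Measure.sum (fun σ : ↥(PermSet T) => Measure.dirac (permApply (σ : PermVec) T))

/-- The symmetrization `ν^sym` of a law `ν` on labeled multitype plane trees. -/
def symLaw {S : Type*} [MeasurableSpace S] (ν : Measure (MTree S)) : Measure (MTree S) :=
  ν.bind symKernel

/-- A law is symmetric if it is equal to its symmetrization. -/
def IsSymmetricLaw {S : Type*} [MeasurableSpace S] (ν : Measure (MTree S)) : Prop :=
  symLaw ν = ν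

/-! ### Valid laws -/

/-- Forget the displacements of a labeled tree. -/
def shape {S : Type*} (T : MTree S) : MTree S := ⟨T.verts, T.type, fun _ => 0⟩

/-- The vector of displacements from `v` to its (first `k`) children. -/
def dispVecAt {S : Type*} (T : MTree S) (v : Vertex) (k : ℕ) : Fin k → ℝ :=
  fun i => T.disp (v ++ [(i : ℕ).succPNat])

/-- The child type vector of `v` (with `k` children). -/
def ctypeAt {S : Type*} (T : MTree S) (v : Vertex) (k : ℕ) : Fin k → S :=
  fun i => T.type (v ++ [(i : ℕ).succPNat])

/-- A family of displacement distributions: for each parent type and each child type vector of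
each length `k`, a measure on `ℝ^k`. -/
abbrev DispFamily (S : Type*) : Type _ :=
  S → (k : ℕ) → (Fin k → S) → Measure (Fin k → ℝ)

/-- `ν` has displacement family `π`: conditionally on the underlying typed tree, the displacement
vectors at the vertices are independent, with laws given by `π` evaluated at the type of a vertex
and its child type vector. -/
def HasDispFamily {S : Type*} [MeasurableSpace S] (ν : Measure (MTree S))
    (π : DispFamily S) : Prop :=
  (∀ r k s, IsProbabilityMeasure (π r k s)) ∧
  ∀ t : MTree S, ∀ B : (v : Vertex) → Set (Fin (nChild t.verts v) → ℝ),
    (∀ v, MeasurableSet (B v)) →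
    ν {T | shape T = shape t ∧ ∀ v ∈ t.verts, dispVecAt T v (nChild t.verts v) ∈ B v}
      = ν {T | shape T = shape t}
        * ∏ v ∈ t.verts, π (t.type v) (nChild t.verts v) (ctypeAt t v (nChild t.verts v)) (B v)

/-- A law on labeled multitype plane trees is valid if it is carried by plane trees, the law of
the underlying typed plane tree is symmetric, and the displacements admit a displacement family
as above. -/
def IsValidLaw {S : Type*} [MeasurableSpace S] (ν : Measure (MTree S)) : Prop :=
  ν {T | ¬ T.IsPlaneTree} = 0 ∧ IsSymmetricLaw (ν.map shape) ∧ ∃ π : DispFamily S, HasDispFamily ν π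

/-! ### Convergence in distribution -/

/-- Convergence in distribution of a sequence of random elements (defined on possibly different
probability spaces) towards a limiting random element: the expectations of every bounded
continuous functional converge. -/
def TendstoInDist {Ω : ℕ → Type*} [∀ n, MeasurableSpace (Ω n)]
    (P : ∀ n, Measure (Ω n)) {E : Type*} [TopologicalSpace E] (X : ∀ n, Ω n → E)
    {Ω₀ : Type*} [MeasurableSpace Ω₀] (P₀ : Measure Ω₀) (Y : Ω₀ → E) : Prop :=
  ∀ f : BoundedContinuousFunction E ℝ,
    Tendsto (fun n => ∫ ω, f (X n ω) ∂(P n)) atTop (𝓝 (∫ ω, f (Y ω) ∂P₀))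

/-- Tightness of a family of laws of random elements of a topological space. -/
def TightSeq {E : Type*} [TopologicalSpace E] {Ω : ℕ → Type*} [∀ n, MeasurableSpace (Ω n)]
    (P : ∀ n, Measure (Ω n)) (X : ∀ n, Ω n → E) : Prop :=
  ∀ ε : ℝ≥0∞, 0 < ε → ∃ K : Set E, IsCompact K ∧ ∀ n, P n {ω | X n ω ∉ K} ≤ ε

/-! ### Galton–Watson laws -/

instance {S : Type*} [MeasurableSpace S] : MeasurableSpace (List S) := ⊤

/-- The child type vector of `v`, as a list. -/
def ctypeList {S : Type*} (T : MTree S) (v : Vertex) : List S :=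
  (List.range (nChild T.verts v)).map fun m => T.type (v ++ [m.succPNat])

/-- `ν` is the law of a multitype Galton–Watson tree with offspring distributions `p`:
the `p s` are permutation-invariant probability measures on finite type sequences, and the
probability that the typed tree equals a given finite plane tree `t` is the product over the
vertices of `t` of the offspring probabilities of the child type vectors (times the probability
of the root type). -/
def IsGWLaw {S : Type*} [MeasurableSpace S] (ν : Measure (MTree S))
    (p : S → Measure (List S)) : Prop :=
  (∀ s, IsProbabilityMeasure (p s)) ∧
  (∀ s : S, ∀ l l' : List S, l.Perm l' → p s {l} = p s {l'}) ∧
  ∀ t : MTree S, t.IsPlaneTree →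
    ν {T | T.verts = t.verts ∧ ∀ v ∈ t.verts, T.type v = t.type v}
      = ν {T | T.type [] = t.type []} * ∏ v ∈ t.verts, p (t.type v) {ctypeList t v}

/-- A tree is normalized if its type and displacement functions take default values off the
vertex set, and (for unlabeled trees) all displacements vanish. -/
def Normalized {S : Type*} (s₀ : S) (T : MTree S) : Prop :=
  (∀ v ∉ T.verts, T.type v = s₀) ∧ T.disp = fun _ => 0

/-! ### Displacement families: symmetrization and centering -/

/-- The symmetrized displacement family `π^{sym}` defined by
`π^{u,sym}_s(B) = (1/k!) ∑_{σ ∈ 𝔖_k} π^u_{σ(s)}(σ(B))`. -/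
def symFamily {S : Type*} (π : DispFamily S) : DispFamily S := fun r k s =>
  ((Nat.factorial k : ℝ≥0∞))⁻¹ •
    ∑ σ : Equiv.Perm (Fin k),
      (π r k fun j => s (σ.symm j)).map fun x : Fin k → ℝ => fun j => x (σ j)

/-- A displacement family is locally centered if every coordinate of every displacement
distribution has mean zero. -/
def LocallyCentered {S : Type*} (π : DispFamily S) : Prop :=
  ∀ (r : S) (k : ℕ) (s : Fin k → S) (i : Fin k), (∫ x, x i ∂(π r k s)) = 0

/-- A displacement family is centered if, for every `k`, every parent type `r` and every vector
`z` of type counts summing to `k`, the sum over all ordered child type sequences with counts `z`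
of the total mean displacement is zero. -/
def Centered {S : Type*} (π : DispFamily S) : Prop :=
  ∀ (k : ℕ) (r : S) (z : S →₀ ℕ), (z.sum fun _ n => n) = k →
    (∑ᶠ s ∈ {s : Fin k → S | ∀ x : S,
        ((Finset.univ.filter fun i => s i = x).card = z x)},
      ∑ i : Fin k, ∫ x, x i ∂(π r k s)) = 0

/-! ### Subtrees spanned by finitely many vertices -/

/-- The vertex set of the subtree spanned by the vertices `r i` and their ancestors. -/
def spanVerts {k : ℕ} (r : Fin k → Vertex) : Finset Vertex :=
  insert ([] : Vertex) (Finset.univ.biUnion fun i => ((r i).inits).toFinset)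

/-- The rank of the child index `i` of `p` among the child indices present in `s`. -/
def childRank (s : Finset Vertex) (p : Vertex) (i : ℕ+) : ℕ+ :=
  ((s.filter fun w => ∃ j : ℕ+, j ≤ i ∧ w = p ++ [j]).card).toPNat'

def reindexAux (s : Finset Vertex) : Vertex → Vertex → Vertex
  | _, [] => []
  | p, i :: rest => childRank s p i :: reindexAux s (p ++ [i]) rest

/-- The Ulam–Harris label, in the plane tree with vertex set `s`, of the node corresponding to
the vertex `v ∈ s`: children are relabeled consecutively, preserving their order. -/
def reindex (s : Finset Vertex) (v : Vertex) : Vertex := reindexAux s [] v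

/-- The set of child indices of `p` present in `s`. -/
def childIdxs (s : Finset Vertex) (p : Vertex) : Finset ℕ+ :=
  (s.filter fun w => ∃ i : ℕ+, w = p ++ [i]).image fun w => w.getLastD 1

/-- The `m`-th smallest child index of `p` present in `s`. -/
def nthChildIndex (s : Finset Vertex) (p : Vertex) (m : ℕ+) : ℕ+ :=
  ((childIdxs s p).sort (· ≤ ·)).getD ((m : ℕ) - 1) 1

def unIndexAux (s : Finset Vertex) : Vertex → Vertex → Vertex
  | _, [] => []
  | p, m :: rest =>
      nthChildIndex s p m :: unIndexAux s (p ++ [nthChildIndex s p m]) rest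

/-- The inverse of `reindex s`. -/
def unIndex (s : Finset Vertex) (w : Vertex) : Vertex := unIndexAux s [] w

/-- The labeled subtree of `T` with vertex set `s ⊆ T.verts`, viewed as a plane tree (with the
plane structure, the types and the displacements inherited from `T`). -/
def spanTree {S : Type*} (T : MTree S) (s : Finset Vertex) : MTree S :=
  ⟨s.image (reindex s), fun w => T.type (unIndex s w), fun w => T.disp (unIndex s w)⟩

/-- The labeled subtree of `T` with vertex set `s`, with the displacements on child edges of
branchpoints replaced by `0` (the modified labeling `d⟨·⟩`). -/
def spanTreeMod {S : Type*} (T : MTree S) (s : Finset Vertex) : MTree S :=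
  ⟨(spanTree T s).verts, (spanTree T s).type,
    fun w => if nChild (spanTree T s).verts w.dropLast = 1 then (spanTree T s).disp w else 0⟩

/-- `R` is a uniform sample of `k` vertices from the random labeled tree `X`: conditionally on
`X`, the coordinates of `R` are independent and uniformly distributed on the vertex set of `X`. -/
def UniformSample {Ω : Type*} [MeasurableSpace Ω] (P : Measure Ω) {S : Type*} [MeasurableSpace S]
    (X : Ω → MTree S) {k : ℕ} (R : Ω → Fin k → Vertex) : Prop :=
  ∀ A : Set (MTree S), MeasurableSet A → ∀ r : Fin k → Vertex,
    P {ω | X ω ∈ A ∧ R ω = r}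
      = ∫⁻ ω in {ω | X ω ∈ A},
          (if ∀ i, r i ∈ (X ω).verts then (((X ω).verts.card : ℝ≥0∞) ^ k)⁻¹ else 0) ∂P

/-! ### Lexicographic enumeration, height process -/

/-- The vertices of `t` in lexicographic order. -/
def lexEnum (t : Finset Vertex) : List Vertex := t.sort (· ≤ ·)

/-- The `i`-th vertex in lexicographic order (`v_{|t|} = v_0` by convention, since `v_0` is the
root `[]`, which is also the default value). -/
def lexVertex (t : Finset Vertex) (i : ℕ) : Vertex := (lexEnum t).getD i []

/-- The height process `H_t`, as a function on `ℝ`. -/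
def heightFun {S : Type*} (T : MTree S) (s : ℝ) : ℝ :=
  interpFun T.verts.card (fun i => ((lexVertex T.verts i).length : ℝ)) s

/-- The lexicographic label process `S_t`, as a function on `ℝ`. -/
def lexLabelFun {S : Type*} (T : MTree S) (s : ℝ) : ℝ :=
  interpFun T.verts.card (fun i => labelOf T (lexVertex T.verts i)) s

/-- The height process `H_t`, as a continuous map on `[0,1]`. -/
def heightProcess {S : Type*} (T : MTree S) : C(unitInterval, ℝ) :=
  interpMap T.verts.card fun i => ((lexVertex T.verts i).length : ℝ)

/-- The lexicographic label process `S_t`, as a continuous map on `[0,1]`. -/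
def lexLabelProcess {S : Type*} (T : MTree S) : C(unitInterval, ℝ) :=
  interpMap T.verts.card fun i => labelOf T (lexVertex T.verts i)

/-- `j_t(i) = 2i - h(v_i)` for `i < |t|`, and `j_t(i) = 2|t| - 2` otherwise. -/
def jIdx (t : Finset Vertex) (i : ℕ) : ℕ :=
  if i < t.card then 2 * i - (lexVertex t i).length else 2 * t.card - 2

/-- `φ_t(s) = |t|⁻¹ · sup {i ≤ |t| : j_t(i) ≤ s(2|t|-2)}`. -/
def phi (t : Finset Vertex) (s : ℝ) : ℝ :=
  ((sSup {i : ℕ | i ≤ t.card ∧ (jIdx t i : ℝ) ≤ s * (2 * t.card - 2)} : ℕ) : ℝ) / t.card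

/-- The increasing reordering of the finite vector `f`. -/
def sortFun {k : ℕ} (f : Fin k → ℝ) (i : ℕ) : ℝ :=
  ((List.ofFn f).insertionSort (· ≤ ·)).getD i 0

instance : MeasurableSpace C(unitInterval, ℝ) := borel _

/-! The contour exploration reaches `v_i` for the first time at time `j_t(i)`: from `v_{i-1}` it
backtracks to the parent of `v_i` and then steps to `v_i`, which takes `j_t(i) - j_t(i-1)` steps;
after `v_{|t|-1}` it returns to the root at time `2|t| - 2`. The height changes by at most one per
step, so on `[j_t(i), j_t(i+1)]` the contour stays within `j_t(i+1) - j_t(i)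
≤ 2 + h(v_i) - h(v_{i+1}) ≤ 2 + dist_t(v_i, v_{i+1})` of `h(v_i)`, while `φ_t` maps this interval
to `i/|t|`, where `H_t` equals `h(v_i)`. -/

lemma le_of_isPrefix {v w : Vertex} (h : v <+: w) : v ≤ w := not_lt.mp h.le

lemma eq_nil_of_le_nil {v : Vertex} (h : v ≤ []) : v = [] := List.le_nil.mp (not_lt.mpr h)

lemma lt_append_cons (v : Vertex) (c : ℕ+) (y : Vertex) : v < v ++ c :: y := by
  simpa using List.append_left_lt (l₁ := v) (List.nil_lt_cons c y)

lemma append_cons_lt_append_cons (p : Vertex) {a b : ℕ+} (x y : Vertex) (hab : a < b) :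
    p ++ a :: x < p ++ b :: y :=
  List.append_left_lt (List.cons_lt_cons_iff.mpr (Or.inl hab))

lemma lt_of_append_lt_append_left {p u w : Vertex} (h : p ++ u < p ++ w) : u < w := by
  induction p with
  | nil => exact h
  | cons a p ih => exact ih (by simpa [List.cons_lt_cons_iff] using h)

lemma isPrefix_or_exists_of_lt {v w : Vertex} (h : v < w) :
    v <+: w ∨ ∃ (p x y : Vertex) (a b : ℕ+), a < b ∧ v = p ++ a :: x ∧ w = p ++ b :: y := by
  induction (h : List.Lex (· < ·) v w) with
  | nil => exact .inl List.nil_prefix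
  | @cons a _ _ _ ih =>
    rcases ih with hp | ⟨p, x, y, a', b', hab, rfl, rfl⟩
    · exact .inl (List.cons_prefix_cons.mpr ⟨rfl, hp⟩)
    · exact .inr ⟨a :: p, x, y, a', b', hab, rfl, rfl⟩
  | @rel a₁ l₁ a₂ l₂ hr => exact .inr ⟨[], l₁, l₂, a₁, a₂, hr, rfl, rfl⟩

/-- `q` descends from an elder sibling of `p ++ [c]`. -/
lemma append_lt_of_lt_append_singleton {p q v : Vertex} {c : ℕ+} (hpq : p <+: q)
    (hlen : p.length < q.length) (hqv : q <+: v) (hv : v < p ++ [c]) (y : Vertex) :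
    q ++ y < p ++ [c] := by
  obtain ⟨_ | ⟨a, x⟩, rfl⟩ := hpq
  · simp at hlen
  obtain ⟨z, rfl⟩ := hqv
  have hac : a < c := by
    have := lt_of_append_lt_append_left (p := p) (u := a :: (x ++ z)) (by simpa using hv)
    simpa [List.cons_lt_cons_iff] using this
  simpa using append_cons_lt_append_cons p (x ++ y) [] hac

section LexEnum

variable {t : Finset Vertex}

lemma length_lexEnum (t : Finset Vertex) : (lexEnum t).length = t.card :=
  Finset.length_sort (· ≤ ·)

lemma lexVertex_eq_getElem {i : ℕ} (hi : i < t.card) :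
    lexVertex t i = (lexEnum t)[i]'(by rwa [length_lexEnum]) :=
  List.getD_eq_getElem _ _ _

lemma lexVertex_mem {i : ℕ} (hi : i < t.card) : lexVertex t i ∈ t := by
  rw [lexVertex_eq_getElem hi]
  exact (Finset.mem_sort (r := (· ≤ ·))).mp (List.getElem_mem _)

lemma lexVertex_lt_lexVertex {i j : ℕ} (hij : i < j) (hj : j < t.card) :
    lexVertex t i < lexVertex t j := by
  rw [lexVertex_eq_getElem (hij.trans hj), lexVertex_eq_getElem hj]
  exact (Finset.sortedLT_sort t).strictMono_get (Fin.mk_lt_mk.mpr hij)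

lemma lexVertex_le_lexVertex {i j : ℕ} (hij : i ≤ j) (hj : j < t.card) :
    lexVertex t i ≤ lexVertex t j := by
  rcases hij.eq_or_lt with rfl | h
  · exact le_rfl
  · exact (lexVertex_lt_lexVertex h hj).le

lemma exists_lexVertex_eq {w : Vertex} (hw : w ∈ t) : ∃ i < t.card, lexVertex t i = w := by
  obtain ⟨i, hi, rfl⟩ := List.getElem_of_mem (show w ∈ lexEnum t from Finset.mem_sort _ |>.mpr hw)
  rw [length_lexEnum] at hi
  exact ⟨i, hi, lexVertex_eq_getElem hi⟩

lemma lexVertex_zero (hroot : [] ∈ t) : lexVertex t 0 = [] := by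
  obtain ⟨i, hi, hw⟩ := exists_lexVertex_eq hroot
  exact eq_nil_of_le_nil (hw ▸ lexVertex_le_lexVertex i.zero_le hi)

lemma lexVertex_card (t : Finset Vertex) : lexVertex t t.card = [] :=
  List.getD_eq_default _ _ (length_lexEnum t).le

lemma lexVertex_succ_le {i : ℕ} (hi : i + 1 < t.card) {w : Vertex} (hw : w ∈ t)
    (hlt : lexVertex t i < w) : lexVertex t (i + 1) ≤ w := by
  obtain ⟨j, hj, rfl⟩ := exists_lexVertex_eq hw
  refine lexVertex_le_lexVertex ?_ hj
  by_contra! hji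
  exact (lexVertex_le_lexVertex (Nat.le_of_lt_succ hji) (by omega)).not_gt hlt

lemma le_lexVertex_card_sub_one {w : Vertex} (hw : w ∈ t) : w ≤ lexVertex t (t.card - 1) := by
  obtain ⟨j, hj, rfl⟩ := exists_lexVertex_eq hw
  exact lexVertex_le_lexVertex (by omega) (by omega)

end LexEnum

def IsPrefixClosed (t : Finset Vertex) : Prop := ∀ v ∈ t, ∀ u : Vertex, u <+: v → u ∈ t

section PrefixClosed

variable {t : Finset Vertex}

lemma exists_lexVertex_succ_eq (hpre : IsPrefixClosed t) {i : ℕ} (hi : i + 1 < t.card) :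
    ∃ (p : Vertex) (c : ℕ+), p <+: lexVertex t i ∧ lexVertex t (i + 1) = p ++ [c] := by
  have hlt : lexVertex t i < lexVertex t (i + 1) := lexVertex_lt_lexVertex i.lt_succ_self hi
  have hmem := lexVertex_mem hi
  rcases isPrefix_or_exists_of_lt hlt with ⟨_ | ⟨c, y⟩, hy⟩ | ⟨p, x, y, a, b, hab, hv, hw⟩
  · simp only [List.append_nil] at hy
    exact absurd (hy ▸ hlt) (lt_irrefl _)
  · have hc : lexVertex t i ++ [c] ∈ t := hpre _ hmem _ ⟨y, by simp [← hy]⟩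
    refine ⟨lexVertex t i, c, List.prefix_refl _, le_antisymm ?_ ?_⟩
    · exact lexVertex_succ_le hi hc (by simpa using lt_append_cons (lexVertex t i) c [])
    · exact le_of_isPrefix ⟨y, by simp [← hy]⟩
  · have hb : p ++ [b] ∈ t := hpre _ hmem _ ⟨y, by simp [hw]⟩
    refine ⟨p, b, ⟨a :: x, hv.symm⟩, le_antisymm ?_ ?_⟩
    · exact lexVertex_succ_le hi hb (hv ▸ append_cons_lt_append_cons p x [] hab)
    · exact le_of_isPrefix ⟨y, by simp [hw]⟩

lemma length_lexVertex_le (hpre : IsPrefixClosed t) (hroot : [] ∈ t) {i : ℕ} (hi : i < t.card) :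
    (lexVertex t i).length ≤ i := by
  induction i with
  | zero => simp [lexVertex_zero hroot]
  | succ i ih =>
    obtain ⟨p, c, hp, hsucc⟩ := exists_lexVertex_succ_eq hpre hi
    have := hp.length_le
    have := ih (by omega)
    simp only [hsucc, List.length_append, List.length_singleton]
    omega

end PrefixClosed

section Contour

variable {t : Finset Vertex}

def HasUnvisitedChild (t : Finset Vertex) (k : ℕ) : Prop :=
  ∃ m : ℕ, theta t k ++ [m.succPNat] ∈ t ∧ theta t k ++ [m.succPNat] ∉ contourHist t k

lemma contourHist_succ_of_hasUnvisitedChild {k : ℕ} (h : HasUnvisitedChild t k) :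
    contourHist t (k + 1) =
      (theta t k ++ [(sInf {m : ℕ | theta t k ++ [m.succPNat] ∈ t ∧
        theta t k ++ [m.succPNat] ∉ contourHist t k}).succPNat]) :: contourHist t k :=
  if_pos h

lemma contourHist_succ_of_not_hasUnvisitedChild {k : ℕ} (h : ¬ HasUnvisitedChild t k) :
    contourHist t (k + 1) = (theta t k).dropLast :: contourHist t k :=
  if_neg h

lemma theta_succ_of_hasUnvisitedChild {k : ℕ} (h : HasUnvisitedChild t k) :
    theta t (k + 1) =
      theta t k ++ [(sInf {m : ℕ | theta t k ++ [m.succPNat] ∈ t ∧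
        theta t k ++ [m.succPNat] ∉ contourHist t k}).succPNat] := by
  rw [theta, contourHist_succ_of_hasUnvisitedChild h]
  rfl

lemma theta_succ_of_not_hasUnvisitedChild {k : ℕ} (h : ¬ HasUnvisitedChild t k) :
    theta t (k + 1) = (theta t k).dropLast := by
  rw [theta, contourHist_succ_of_not_hasUnvisitedChild h]
  rfl

lemma abs_length_theta_succ_sub_le (t : Finset Vertex) (k : ℕ) :
    |((theta t (k + 1)).length : ℝ) - (theta t k).length| ≤ 1 := by
  by_cases h : HasUnvisitedChild t k
  · simp [theta_succ_of_hasUnvisitedChild h]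
  · rw [theta_succ_of_not_hasUnvisitedChild h, List.length_dropLast]
    rcases Nat.eq_zero_or_pos (theta t k).length with h0 | h0
    · simp [h0]
    · simp [Nat.cast_sub h0]

lemma abs_length_theta_sub_le (t : Finset Vertex) {i j : ℕ} (hij : i ≤ j) :
    |((theta t j).length : ℝ) - (theta t i).length| ≤ j - i := by
  induction j, hij using Nat.le_induction with
  | base => simp
  | succ j _ ih =>
    calc |((theta t (j + 1)).length : ℝ) - (theta t i).length|
        ≤ |((theta t (j + 1)).length : ℝ) - (theta t j).length|
          + |((theta t j).length : ℝ) - (theta t i).length| := abs_sub_le _ _ _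
      _ ≤ 1 + (j - i) := add_le_add (abs_length_theta_succ_sub_le t j) ih
      _ = ((j + 1 : ℕ) : ℝ) - i := by push_cast; ring

def ExploredUpTo (t : Finset Vertex) (k : ℕ) (v : Vertex) : Prop :=
  ∀ w, w ∈ contourHist t k ↔ w ∈ t ∧ w ≤ v

lemma theta_succ_eq_dropLast {k : ℕ} {u v : Vertex} (hpre : IsPrefixClosed t) (hv : v ∈ t)
    (hu : theta t k = u) (huv : u <+: v) (hexp : ExploredUpTo t k v)
    (hchild : ∀ m : ℕ+, u ++ [m] ∈ t → u ++ [m] ≤ v) :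
    theta t (k + 1) = u.dropLast ∧ ExploredUpTo t (k + 1) v := by
  have hnot : ¬ HasUnvisitedChild t k := by
    rintro ⟨m, hm, hnew⟩
    rw [hu] at hm hnew
    exact hnew ((hexp _).mpr ⟨hm, hchild _ hm⟩)
  have hparent : u.dropLast <+: v := (List.dropLast_prefix u).trans huv
  refine ⟨by rw [theta_succ_of_not_hasUnvisitedChild hnot, hu], fun w => ?_⟩
  rw [contourHist_succ_of_not_hasUnvisitedChild hnot, hu, List.mem_cons, hexp]
  constructor
  · rintro (rfl | hw)
    · exact ⟨hpre _ hv _ hparent, le_of_isPrefix hparent⟩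
    · exact hw
  · exact Or.inr

lemma theta_add_eq_of_isPrefix {k : ℕ} {p v : Vertex} (hpre : IsPrefixClosed t) (hv : v ∈ t)
    (hth : theta t k = v) (hexp : ExploredUpTo t k v) (hpv : p <+: v)
    (hchild : ∀ q, p.length < q.length → q <+: v → ∀ m : ℕ+, q ++ [m] ∈ t → q ++ [m] ≤ v) :
    theta t (k + (v.length - p.length)) = p ∧
      ExploredUpTo t (k + (v.length - p.length)) v := by
  suffices h : ∀ r ≤ v.length - p.length,
      theta t (k + r) = v.take (v.length - r) ∧ ExploredUpTo t (k + r) v by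
    obtain ⟨hth', hexp'⟩ := h _ le_rfl
    refine ⟨?_, hexp'⟩
    rw [hth', Nat.sub_sub_self hpv.length_le, ← List.prefix_iff_eq_take.mp hpv]
  intro r
  induction r with
  | zero => simpa using ⟨hth, hexp⟩
  | succ r ih =>
    intro hr
    obtain ⟨hth', hexp'⟩ := ih (by omega)
    have hq : v.take (v.length - r) <+: v := List.take_prefix _ _
    obtain ⟨hth'', hexp''⟩ := theta_succ_eq_dropLast hpre hv hth' hq hexp' fun m hm =>
      hchild _ (by rw [List.length_take]; omega) hq m hm
    refine ⟨?_, hexp''⟩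
    rw [← add_assoc, hth'', List.dropLast_eq_take, List.length_take, List.take_take]
    congr 1
    omega

lemma theta_succ_eq_append {k : ℕ} {p v : Vertex} {c : ℕ+} (hth : theta t k = p)
    (hexp : ExploredUpTo t k v) (hc : p ++ [c] ∈ t) (hvc : v < p ++ [c])
    (hmin : ∀ w ∈ t, v < w → p ++ [c] ≤ w) :
    theta t (k + 1) = p ++ [c] ∧ ExploredUpTo t (k + 1) (p ++ [c]) := by
  have hle_of_lt : ∀ w ∈ t, w < p ++ [c] → w ≤ v := fun w hw hwc =>
    not_lt.mp fun hvw => (hmin w hw hvw).not_gt hwc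
  have hc_new : p ++ [c] ∉ contourHist t k := fun h => ((hexp _).mp h).2.not_gt hvc
  have hmem : c.natPred ∈ {m : ℕ | theta t k ++ [m.succPNat] ∈ t ∧
      theta t k ++ [m.succPNat] ∉ contourHist t k} := by
    simpa [hth] using ⟨hc, hc_new⟩
  have hinf : sInf {m : ℕ | theta t k ++ [m.succPNat] ∈ t ∧
      theta t k ++ [m.succPNat] ∉ contourHist t k} = c.natPred := by
    refine le_antisymm (Nat.sInf_le hmem) (le_csInf ⟨_, hmem⟩ fun m ⟨hm, hm_new⟩ => ?_)
    rw [hth] at hm hm_new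
    by_contra! hlt
    have hmc : m.succPNat < c := by
      rw [← PNat.coe_lt_coe, Nat.succPNat_coe, ← PNat.natPred_add_one c]
      omega
    exact hm_new ((hexp _).mpr ⟨hm, hle_of_lt _ hm (append_cons_lt_append_cons p [] [] hmc)⟩)
  have hstep := contourHist_succ_of_hasUnvisitedChild ⟨_, hmem⟩
  rw [hinf, PNat.succPNat_natPred, hth] at hstep
  refine ⟨by rw [theta, hstep]; rfl, fun w => ?_⟩
  rw [hstep, List.mem_cons, hexp]
  constructor
  · rintro (rfl | ⟨hw, hwv⟩)
    · exact ⟨hc, le_rfl⟩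
    · exact ⟨hw, hwv.trans hvc.le⟩
  · rintro ⟨hw, hwc⟩
    rcases hwc.eq_or_lt with rfl | hlt
    · exact .inl rfl
    · exact .inr ⟨hw, hle_of_lt w hw hlt⟩

end Contour

section Exploration

variable {t : Finset Vertex}

lemma jIdx_of_lt {i : ℕ} (hi : i < t.card) : jIdx t i = 2 * i - (lexVertex t i).length :=
  if_pos hi

lemma jIdx_of_le {i : ℕ} (hi : t.card ≤ i) : jIdx t i = 2 * t.card - 2 :=
  if_neg (not_lt.mpr hi)

lemma theta_jIdx_of_lt (hpre : IsPrefixClosed t) (hroot : [] ∈ t) {i : ℕ} (hi : i < t.card) :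
    theta t (jIdx t i) = lexVertex t i ∧ ExploredUpTo t (jIdx t i) (lexVertex t i) := by
  induction i with
  | zero =>
    rw [jIdx_of_lt hi, lexVertex_zero hroot]
    refine ⟨rfl, fun w => ?_⟩
    show w ∈ [([] : Vertex)] ↔ _
    rw [List.mem_singleton]
    exact ⟨fun h => ⟨h ▸ hroot, h.le⟩, fun h => eq_nil_of_le_nil h.2⟩
  | succ i ih =>
    obtain ⟨hth, hexp⟩ := ih (by omega)
    obtain ⟨p, c, hp, hsucc⟩ := exists_lexVertex_succ_eq hpre hi
    have hlt : lexVertex t i < p ++ [c] := hsucc ▸ lexVertex_lt_lexVertex i.lt_succ_self hi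
    have hmin : ∀ w ∈ t, lexVertex t i < w → p ++ [c] ≤ w :=
      hsucc ▸ fun w hw => lexVertex_succ_le hi hw
    obtain ⟨hth', hexp'⟩ := theta_add_eq_of_isPrefix hpre (lexVertex_mem (by omega)) hth hexp hp
      fun q hq hqv m hm => not_lt.mp fun hvq => (hmin _ hm hvq).not_gt
        (append_lt_of_lt_append_singleton (List.prefix_of_prefix_length_le hp hqv hq.le) hq hqv
          hlt [m])
    have hjump : jIdx t (i + 1) = jIdx t i + ((lexVertex t i).length - p.length) + 1 := by
      have := length_lexVertex_le hpre hroot (i := i) (by omega)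
      have := hp.length_le
      rw [jIdx_of_lt hi, jIdx_of_lt (by omega), hsucc, List.length_append, List.length_singleton]
      omega
    rw [hjump, hsucc]
    exact theta_succ_eq_append hth' hexp' (hsucc ▸ lexVertex_mem hi) hlt hmin

lemma theta_two_mul_card_sub_two (hpre : IsPrefixClosed t) (hroot : [] ∈ t) :
    theta t (2 * t.card - 2) = [] := by
  have hn : 0 < t.card := Finset.card_pos.mpr ⟨_, hroot⟩
  have hlast : t.card - 1 < t.card := by omega
  obtain ⟨hth, hexp⟩ := theta_jIdx_of_lt hpre hroot hlast
  obtain ⟨hth', -⟩ := theta_add_eq_of_isPrefix hpre (lexVertex_mem hlast) hth hexp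
    List.nil_prefix fun _ _ _ _ hm => le_lexVertex_card_sub_one hm
  have := length_lexVertex_le hpre hroot hlast
  rwa [jIdx_of_lt hlast, List.length_nil, Nat.sub_zero,
    show 2 * (t.card - 1) - (lexVertex t (t.card - 1)).length + (lexVertex t (t.card - 1)).length
      = 2 * t.card - 2 by omega] at hth'

lemma theta_jIdx (hpre : IsPrefixClosed t) (hroot : [] ∈ t) {i : ℕ} (hi : i ≤ t.card) :
    theta t (jIdx t i) = lexVertex t i := by
  rcases hi.lt_or_eq with h | rfl
  · exact (theta_jIdx_of_lt hpre hroot h).1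
  · rw [jIdx_of_le le_rfl, lexVertex_card, theta_two_mul_card_sub_two hpre hroot]

lemma abs_length_theta_sub_length_lexVertex_le (hpre : IsPrefixClosed t) (hroot : [] ∈ t)
    {i j : ℕ} (hi : i ≤ t.card) (hij : jIdx t i ≤ j) (hji : j ≤ jIdx t (i + 1)) :
    |((theta t j).length : ℝ) - (lexVertex t i).length| ≤ (jIdx t (i + 1) : ℝ) - jIdx t i := by
  rw [← theta_jIdx hpre hroot hi]
  exact (abs_length_theta_sub_le t hij).trans (by gcongr)

end Exploration

section Interpolation

lemma interpFun_eq_of_mem_cell (f : ℕ → ℝ) {n k : ℕ} {s : ℝ} (hk : k < n)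
    (h₁ : (k : ℝ) ≤ s * n) (h₂ : s * n ≤ k + 1) :
    interpFun n f s = f k + (f (k + 1) - f k) * (s * n - k) := by
  have key : ∀ m, k + 1 ≤ m →
      ∑ j ∈ Finset.range m, (f (j + 1) - f j) * max 0 (min 1 (s * n - j))
        = f k - f 0 + (f (k + 1) - f k) * (s * n - k) := by
    intro m hm
    induction m, hm using Nat.le_induction with
    | base =>
      have hbelow : ∀ j ∈ Finset.range k,
          (f (j + 1) - f j) * max 0 (min 1 (s * n - j)) = f (j + 1) - f j := by
        intro j hj
        have : (j : ℝ) + 1 ≤ k := by exact_mod_cast Finset.mem_range.mp hj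
        rw [min_eq_left (by linarith), max_eq_right zero_le_one, mul_one]
      rw [Finset.sum_range_succ, Finset.sum_congr rfl hbelow, Finset.sum_range_sub,
        min_eq_right (by linarith), max_eq_right (by linarith)]
    | succ m hm ih =>
      have : (k : ℝ) + 1 ≤ m := by exact_mod_cast hm
      rw [Finset.sum_range_succ, ih, min_eq_right (by linarith), max_eq_left (by linarith),
        mul_zero, add_zero]
  rw [interpFun, key n hk]
  ring

lemma interpFun_natCast_div (f : ℕ → ℝ) {n i : ℕ} (hn : 0 < n) (hi : i ≤ n) :
    interpFun n f (i / n) = f i := by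
  have hsn : (i : ℝ) / n * n = i := div_mul_cancel₀ _ (by positivity)
  rcases hi.lt_or_eq with h | rfl
  · rw [interpFun_eq_of_mem_cell f h (by rw [hsn]) (by rw [hsn]; linarith), hsn]
    ring
  · obtain ⟨k, rfl⟩ : ∃ k, i = k + 1 := ⟨i - 1, by omega⟩
    push_cast at hsn ⊢
    rw [interpFun_eq_of_mem_cell f k.lt_succ_self (by push_cast; linarith)
      (by push_cast; linarith)]
    push_cast
    rw [hsn]
    ring

lemma abs_interpFun_sub_le (f : ℕ → ℝ) {n a b : ℕ} {s c M : ℝ} (hbn : b ≤ n)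
    (ha : (a : ℝ) ≤ s * n) (hb : s * n ≤ b) (hf : ∀ j, a ≤ j → j ≤ b → |f j - c| ≤ M) :
    |interpFun n f s - c| ≤ M := by
  rcases (show a ≤ b by exact_mod_cast ha.trans hb).eq_or_lt with rfl | hab
  · rcases Nat.eq_zero_or_pos n with rfl | hn
    · obtain rfl : a = 0 := by omega
      simpa [interpFun] using hf 0 le_rfl le_rfl
    · have hs : s = a / n := by
        rw [eq_div_iff (by positivity)]
        linarith
      rw [hs, interpFun_natCast_div f hn hbn]
      exact hf a le_rfl le_rfl
  · have hsn : 0 ≤ s * n := (Nat.cast_nonneg a).trans ha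
    set k := min ⌊s * n⌋₊ (b - 1) with hk
    have hak : a ≤ k := le_min (Nat.le_floor ha) (by omega)
    have hkb : k + 1 ≤ b := by omega
    have h₁ : (k : ℝ) ≤ s * n := (Nat.cast_le.mpr (min_le_left _ _)).trans (Nat.floor_le hsn)
    have h₂ : s * n ≤ k + 1 := by
      rcases min_choice ⌊s * n⌋₊ (b - 1) with h | h <;> rw [hk, h]
      · exact (Nat.lt_floor_add_one _).le
      · rwa [← Nat.cast_add_one, Nat.sub_add_cancel (by omega)]
    have hfk := abs_le.mp (hf k hak (by omega))
    have hfk₁ := abs_le.mp (hf (k + 1) (by omega) hkb)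
    rw [interpFun_eq_of_mem_cell f (by omega) h₁ h₂, abs_le]
    constructor <;> nlinarith

end Interpolation

section HeightComparison

variable {t : Finset Vertex}

lemma jIdx_le_two_mul_card_sub_two (t : Finset Vertex) (i : ℕ) : jIdx t i ≤ 2 * t.card - 2 := by
  unfold jIdx
  split_ifs <;> omega

lemma cast_two_mul_card_sub_two (hn : 0 < t.card) :
    ((2 * t.card - 2 : ℕ) : ℝ) = 2 * t.card - 2 := by
  rw [Nat.cast_sub (by omega)]
  push_cast
  ring

def phiIndex (t : Finset Vertex) (s : ℝ) : ℕ :=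
  sSup {i : ℕ | i ≤ t.card ∧ (jIdx t i : ℝ) ≤ s * (2 * t.card - 2)}

lemma phi_eq_phiIndex_div (t : Finset Vertex) (s : ℝ) : phi t s = phiIndex t s / t.card := rfl

lemma phiIndex_spec (hn : 0 < t.card) {s : ℝ} (hs₀ : 0 ≤ s) (hs₁ : s ≤ 1) :
    phiIndex t s ≤ t.card ∧ (jIdx t (phiIndex t s) : ℝ) ≤ s * (2 * t.card - 2) ∧
      s * (2 * t.card - 2) ≤ jIdx t (phiIndex t s + 1) := by
  set A := {i : ℕ | i ≤ t.card ∧ (jIdx t i : ℝ) ≤ s * (2 * t.card - 2)}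
  have hm : (0 : ℝ) ≤ 2 * t.card - 2 := by
    have : (1 : ℝ) ≤ t.card := by exact_mod_cast hn
    linarith
  have h0 : 0 ∈ A := ⟨Nat.zero_le _, by simpa [jIdx_of_lt hn] using mul_nonneg hs₀ hm⟩
  have hbdd : BddAbove A := ⟨t.card, fun i hi => hi.1⟩
  obtain ⟨hle, hjle⟩ : phiIndex t s ∈ A := Nat.sSup_mem ⟨0, h0⟩ hbdd
  refine ⟨hle, hjle, ?_⟩
  rcases hle.lt_or_eq with hlt | heq
  · by_contra! h
    exact (le_csSup hbdd ⟨hlt, h.le⟩).not_gt (Nat.lt_succ_self _)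
  · rw [jIdx_of_le (by omega), cast_two_mul_card_sub_two hn]
    nlinarith

lemma lcpLen_le_length_right : ∀ u w : Vertex, lcpLen u w ≤ w.length
  | [], _ => by simp [lcpLen]
  | _ :: _, [] => by simp [lcpLen]
  | a :: u, b :: w => by
    by_cases h : a = b
    · simpa [lcpLen, h] using lcpLen_le_length_right u w
    · simp [lcpLen, h]

lemma length_sub_length_le_treeDist (u w : Vertex) :
    (u.length : ℝ) - w.length ≤ treeDist u w := by
  have := lcpLen_le_length_right u w
  have h : u.length ≤ w.length + treeDist u w := by
    unfold treeDist
    omega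
  have h' : (u.length : ℝ) ≤ w.length + treeDist u w := by exact_mod_cast h
  linarith

lemma jIdx_succ_sub_jIdx_le (hpre : IsPrefixClosed t) (hroot : [] ∈ t) {i : ℕ}
    (hi : i < t.card) :
    (jIdx t (i + 1) : ℝ) - jIdx t i ≤ 2 + treeDist (lexVertex t i) (lexVertex t (i + 1)) := by
  have hjump : jIdx t (i + 1) + (lexVertex t (i + 1)).length ≤
      jIdx t i + 2 + (lexVertex t i).length := by
    have := length_lexVertex_le hpre hroot hi
    rw [jIdx_of_lt hi]
    rcases (show i + 1 ≤ t.card from hi).lt_or_eq with h | h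
    · have := length_lexVertex_le hpre hroot h
      rw [jIdx_of_lt h]
      omega
    · rw [h, jIdx_of_le le_rfl, lexVertex_card]
      simp only [List.length_nil]
      omega
  have hjump' : (jIdx t (i + 1) : ℝ) + (lexVertex t (i + 1)).length ≤
      jIdx t i + 2 + (lexVertex t i).length := by exact_mod_cast hjump
  linarith [length_sub_length_le_treeDist (lexVertex t i) (lexVertex t (i + 1))]

lemma abs_contourFun_sub_length_lexVertex_le {S : Type*} (T : MTree S)
    (hpre : IsPrefixClosed T.verts) (hroot : [] ∈ T.verts) {i : ℕ} (hi : i ≤ T.verts.card)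
    {s : ℝ} (hlo : (jIdx T.verts i : ℝ) ≤ s * (2 * T.verts.card - 2))
    (hhi : s * (2 * T.verts.card - 2) ≤ jIdx T.verts (i + 1)) :
    |contourFun T s - (lexVertex T.verts i).length|
      ≤ (jIdx T.verts (i + 1) : ℝ) - jIdx T.verts i := by
  have hn : 0 < T.verts.card := Finset.card_pos.mpr ⟨_, hroot⟩
  refine abs_interpFun_sub_le _ (jIdx_le_two_mul_card_sub_two _ _) ?_ ?_
    fun j hj₁ hj₂ => abs_length_theta_sub_length_lexVertex_le hpre hroot hi hj₁ hj₂
  · rwa [cast_two_mul_card_sub_two hn]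
  · rwa [cast_two_mul_card_sub_two hn]

end HeightComparison

/-- equation (3.1) in the proof of Proposition 3.7. In a rooted plane tree
with vertices `v_0, …, v_{|t|-1}` in lexicographic order (and `v_{|t|} = v_0`),
`sup_{0 ≤ s ≤ 1} |C_t(s) - H_t(φ_t(s))| ≤ 2 + max_{0 ≤ i < |t|} dist_t(v_i, v_{i+1})`. -/
theorem statement13 {S : Type*} (T : MTree S) (hT : T.IsPlaneTree) :
    ∀ s ∈ Set.Icc (0:ℝ) 1,
      |contourFun T s - heightFun T (phi T.verts s)|
        ≤ 2 + ((((Finset.range T.verts.card).sup fun i =>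
            treeDist (lexVertex T.verts i) (lexVertex T.verts (i + 1))) : ℕ) : ℝ) := by
  rintro s ⟨hs₀, hs₁⟩
  have hpre : IsPrefixClosed T.verts := hT.2.1
  have hroot : [] ∈ T.verts := hT.1
  have hn : 0 < T.verts.card := Finset.card_pos.mpr ⟨_, hroot⟩
  obtain ⟨hi, hlo, hhi⟩ := phiIndex_spec hn hs₀ hs₁
  have hH : heightFun T (phi T.verts s) = (lexVertex T.verts (phiIndex T.verts s)).length := by
    rw [phi_eq_phiIndex_div]
    exact interpFun_natCast_div _ hn hi
  rw [hH]
  refine (abs_contourFun_sub_length_lexVertex_le T hpre hroot hi hlo hhi).trans ?_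
  rcases hi.lt_or_eq with hlt | heq
  · refine (jIdx_succ_sub_jIdx_le hpre hroot hlt).trans ?_
    gcongr
    exact Finset.le_sup (f := fun i => treeDist (lexVertex T.verts i) (lexVertex T.verts (i + 1)))
      (Finset.mem_range.mpr hlt)
  · rw [heq, jIdx_of_le le_rfl, jIdx_of_le (by omega), sub_self]
    positivity

end TreeSym
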